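/- arXiv:2308.03069 — 2 statements merged into one kernel-verified Lean document; each statement's English description precedes it below -/
import Mathlib

section
/- Let Q be an integral commutative quantale and I an ideal. Then R(I) equals the intersection of all prime ideals P of Q containing I. -/
class ICQuantale (Q : Type*) extends CompleteLattice Q, Mul Q where
  mul_assoc : ∀ x y z : Q, x * y * z = x * (y * z)
  mul_comm : ∀ x y : Q, x * y = y * x
  mul_sSup : ∀ (x : Q) (s : Set Q), x * sSup s = ⨆ y ∈ s, x * y
  mul_top : ∀ x : Q, x * ⊤ = x

variable {Q : Type*} [ICQuantale Q]

def qpow (x : Q) : ℕ → Q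
  | 0 => ⊤
  | n+1 => qpow x n * x

def IsIdeal (I : Set Q) : Prop :=
  I.Nonempty ∧ (∀ x ∈ I, ∀ y ∈ I, x ⊔ y ∈ I) ∧ (∀ x ∈ I, ∀ l, l ≤ x → l ∈ I)

def res (I J : Set Q) : Set Q := {x | ∀ j ∈ J, x * j ∈ I}

def prodIdeal (I J : Set Q) : Set Q :=
  {l | ∃ F : Finset (Q × Q), (∀ p ∈ F, p.1 ∈ I ∧ p.2 ∈ J) ∧ l ≤ F.sup (fun p => p.1 * p.2)}

def rad (I : Set Q) : Set Q := {x | ∃ n, 1 ≤ n ∧ qpow x n ∈ I}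

def IsPrimeIdeal (P : Set Q) : Prop :=
  IsIdeal P ∧ P ≠ Set.univ ∧ ∀ x y : Q, x * y ∈ P → x ∈ P ∨ y ∈ P

def IsPrimaryIdeal (I : Set Q) : Prop :=
  IsIdeal I ∧ I ≠ Set.univ ∧ ∀ x y : Q, x * y ∈ I → x ∈ I ∨ ∃ n, 1 ≤ n ∧ qpow y n ∈ I

def MultClosed (S : Set Q) : Prop := ⊤ ∈ S ∧ ∀ x ∈ S, ∀ y ∈ S, x * y ∈ S

def ann (S : Set Q) : Set Q := {x | ∀ s ∈ S, x * s = ⊥}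

/-!
If `x ∉ R(I)`, the powers of `x` form a multiplicatively closed set disjoint from `I`. By Zorn's
lemma some ideal `P ⊇ I` is maximal among the ideals avoiding the powers of `x`, and the usual
Krull argument shows that `P` is prime: in an integral quantale
`(p ⊔ a) * (q ⊔ b) ≤ p ⊔ q ⊔ a * b`, so if neither `a` nor `b` lies in `P`, enlarging `P` by `a`
and by `b` produces powers `s ≤ p ⊔ a` and `t ≤ q ⊔ b`, and then `a * b ∉ P` since `s * t ∉ P`.
-/

namespace ICQuantale

theorem mul_sup (a b c : Q) : a * (b ⊔ c) = a * b ⊔ a * c := by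
  rw [← sSup_pair, ICQuantale.mul_sSup, iSup_pair]

theorem top_mul (a : Q) : ⊤ * a = a := by
  rw [ICQuantale.mul_comm, ICQuantale.mul_top]

theorem mul_le_mul_left {b c : Q} (h : b ≤ c) (a : Q) : a * b ≤ a * c :=
  calc a * b ≤ a * b ⊔ a * c := le_sup_left
    _ = a * c := by rw [← mul_sup, sup_eq_right.2 h]

theorem mul_le_mul {a b c d : Q} (hab : a ≤ b) (hcd : c ≤ d) : a * c ≤ b * d :=
  calc a * c ≤ a * d := mul_le_mul_left hcd a
    _ = d * a := ICQuantale.mul_comm a d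
    _ ≤ d * b := mul_le_mul_left hab d
    _ = b * d := ICQuantale.mul_comm d b

theorem mul_le_right (a b : Q) : a * b ≤ b := by
  simpa only [top_mul] using mul_le_mul (le_top : a ≤ ⊤) le_rfl

theorem sup_mul_sup_le (p a q b : Q) : (p ⊔ a) * (q ⊔ b) ≤ p ⊔ q ⊔ a * b := by
  rw [mul_sup, ICQuantale.mul_comm (p ⊔ a) b, mul_sup, ICQuantale.mul_comm b a]
  exact sup_le ((mul_le_right _ q).trans (le_sup_right.trans le_sup_left))
    (sup_le ((mul_le_right b p).trans (le_sup_left.trans le_sup_left)) le_sup_right)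

end ICQuantale

open ICQuantale

theorem qpow_one (x : Q) : qpow x 1 = x :=
  top_mul x

theorem qpow_add (x : Q) (m n : ℕ) : qpow x (m + n) = qpow x m * qpow x n := by
  induction n with
  | zero => exact (ICQuantale.mul_top _).symm
  | succ n ih => rw [← add_assoc, qpow, qpow, ih, ICQuantale.mul_assoc]

theorem multClosed_range_qpow (x : Q) : MultClosed (Set.range (qpow x)) :=
  ⟨⟨0, rfl⟩, by rintro _ ⟨m, rfl⟩ _ ⟨n, rfl⟩; exact ⟨m + n, qpow_add x m n⟩⟩

theorem isIdeal_iff_order_isIdeal {I : Set Q} : IsIdeal I ↔ Order.IsIdeal I := by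
  refine ⟨fun ⟨hne, hsup, hlower⟩ => ⟨fun a b hba ha => hlower a ha b hba, hne, ?_⟩,
    fun h => ⟨h.Nonempty, fun x hx y hy => h.toIdeal.sup_mem hx hy,
      fun x hx l hl => h.IsLowerSet hl hx⟩⟩
  exact fun x hx y hy => ⟨x ⊔ y, hsup x hx y hy, le_sup_left, le_sup_right⟩

theorem IsPrimeIdeal.mem_of_qpow_mem {P : Set Q} (hP : IsPrimeIdeal P) {x : Q} :
    ∀ {n : ℕ}, qpow x n ∈ P → x ∈ P
  | 0, h => hP.1.2.2 ⊤ h x le_top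
  | _ + 1, h => (hP.2.2 _ _ h).elim hP.mem_of_qpow_mem id

theorem rad_subset_of_isPrimeIdeal {I P : Set Q} (hP : IsPrimeIdeal P) (hIP : I ⊆ P) :
    rad I ⊆ P :=
  fun _ ⟨_, _, hx⟩ => hP.mem_of_qpow_mem (hIP hx)

theorem disjoint_range_qpow_of_notMem_rad {I : Set Q} (hI : IsIdeal I) {x : Q}
    (hx : x ∉ rad I) : Disjoint I (Set.range (qpow x)) := by
  rw [Set.disjoint_right]
  rintro _ ⟨_ | n, rfl⟩ hn
  · exact hx ⟨1, le_rfl, hI.2.2 ⊤ hn _ le_top⟩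
  · exact hx ⟨n + 1, n.succ_pos, hn⟩

theorem exists_le_maximal_isIdeal_disjoint {I S : Set Q} (hI : IsIdeal I) (hIS : Disjoint I S) :
    ∃ P, I ⊆ P ∧ Maximal (fun J : Set Q => IsIdeal J ∧ Disjoint J S) P := by
  refine zorn_subset_nonempty {J | IsIdeal J ∧ Disjoint J S} ?_ I ⟨hI, hIS⟩
  intro c hc hchain hne
  refine ⟨⋃₀ c, ⟨?_, Set.disjoint_sUnion_left.2 fun J hJ => (hc hJ).2⟩,
    fun _ => Set.subset_sUnion_of_mem⟩
  exact isIdeal_iff_order_isIdeal.2 <|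
    Order.isIdeal_sUnion_of_isChain (fun J hJ => isIdeal_iff_order_isIdeal.1 (hc hJ).1) hchain hne

theorem Maximal.exists_le_sup_of_notMem {S P : Set Q}
    (hP : Maximal (fun J : Set Q => IsIdeal J ∧ Disjoint J S) P) {a : Q} (ha : a ∉ P) :
    ∃ s ∈ S, ∃ p ∈ P, s ≤ p ⊔ a := by
  let J : Order.Ideal Q := (isIdeal_iff_order_isIdeal.1 hP.1.1).toIdeal ⊔ Order.Ideal.principal a
  have hPJ : P ⊆ J := fun p hp => (le_sup_left : _ ≤ J) hp
  have haJ : a ∈ J := (le_sup_right : _ ≤ J) Order.Ideal.mem_principal_self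
  have hJS : ¬ Disjoint (J : Set Q) S := fun hJS =>
    ha (hP.2 ⟨isIdeal_iff_order_isIdeal.2 J.isIdeal, hJS⟩ hPJ haJ)
  obtain ⟨s, hsJ, hsS⟩ := Set.not_disjoint_iff.1 hJS
  obtain ⟨p, hp, c, hca, hs⟩ := Order.Ideal.mem_sup.1 hsJ
  exact ⟨s, hsS, p, hp, hs.trans (sup_le_sup_left (Order.Ideal.mem_principal.1 hca) p)⟩

theorem isPrimeIdeal_of_maximal_disjoint {S P : Set Q} (hS : MultClosed S)
    (hP : Maximal (fun J : Set Q => IsIdeal J ∧ Disjoint J S) P) : IsPrimeIdeal P := by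
  obtain ⟨hPideal, hPS⟩ := hP.1
  refine ⟨hPideal, fun h => Set.disjoint_left.1 hPS (h ▸ Set.mem_univ ⊤) hS.1, ?_⟩
  intro a b hab
  by_contra! hnot
  obtain ⟨s, hs, p, hp, hsa⟩ := hP.exists_le_sup_of_notMem hnot.1
  obtain ⟨t, ht, q, hq, htb⟩ := hP.exists_le_sup_of_notMem hnot.2
  have hsup : p ⊔ q ⊔ a * b ∈ P := hPideal.2.1 _ (hPideal.2.1 p hp q hq) _ hab
  have hst : s * t ∈ P :=
    hPideal.2.2 _ hsup _ ((mul_le_mul hsa htb).trans (sup_mul_sup_le p a q b))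
  exact Set.disjoint_left.1 hPS hst (hS.2 s hs t ht)

theorem stmt14 {I : Set Q} (hI : IsIdeal I) :
    rad I = ⋂₀ {P : Set Q | IsPrimeIdeal P ∧ I ⊆ P} := by
  refine subset_antisymm (fun x hx P ⟨hP, hIP⟩ => rad_subset_of_isPrimeIdeal hP hIP hx) ?_
  intro x hx
  by_contra hxI
  obtain ⟨P, hIP, hP⟩ :=
    exists_le_maximal_isIdeal_disjoint hI (disjoint_range_qpow_of_notMem_rad hI hxI)
  have hxP : x ∈ P :=
    hx P ⟨isPrimeIdeal_of_maximal_disjoint (multClosed_range_qpow x) hP, hIP⟩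
  exact Set.disjoint_left.1 hP.1.2 hxP ⟨1, qpow_one x⟩
end

section
/- Let Q be an integral commutative quantale, P a prime ideal, and P₁, ..., Pₙ primary ideals each with radical equal to P. Then the intersection P₁ ∩ ⋯ ∩ Pₙ is a primary ideal with radical P. -/
variable {Q : Type*} [ICQuantale Q]

/-! The radical commutes with finite intersections of ideals: if `x ^ nᵢ ∈ Pᵢ` for each `i`, then
`x ^ (max nᵢ) ∈ ⋂ Pᵢ`, because powers decrease in an integral quantale (`x * y ≤ x * ⊤ = x`).
Hence `rad (⋂ Pᵢ) = P`. If `x * y ∈ ⋂ Pᵢ` and `x ∉ Pⱼ`, primarity of `Pⱼ` puts `y` in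
`rad Pⱼ = P = rad (⋂ Pᵢ)`, so the intersection is primary. -/

namespace ICQuantale

theorem mul_le_mul_left_s17 (x : Q) {y z : Q} (h : y ≤ z) : x * y ≤ x * z := by
  have hpair : sSup ({y, z} : Set Q) = z := by rw [sSup_pair, sup_eq_right.mpr h]
  calc x * y ≤ ⨆ w ∈ ({y, z} : Set Q), x * w := le_iSup₂_of_le y (by simp) le_rfl
    _ = x * z := by rw [← mul_sSup, hpair]

theorem mul_le_left (x y : Q) : x * y ≤ x :=
  (mul_le_mul_left_s17 x le_top).trans_eq (mul_top x)

end ICQuantale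

theorem qpow_antitone (x : Q) : Antitone (qpow x) :=
  antitone_nat_of_succ_le fun n => ICQuantale.mul_le_left (qpow x n) x

theorem IsIdeal.mem_of_le {I : Set Q} (hI : IsIdeal I) {x l : Q} (hx : x ∈ I) (hl : l ≤ x) :
    l ∈ I :=
  hI.2.2 x hx l hl

theorem IsIdeal.bot_mem {I : Set Q} (hI : IsIdeal I) : ⊥ ∈ I :=
  hI.mem_of_le hI.1.some_mem bot_le

theorem isIdeal_iInter {ι : Type*} {f : ι → Set Q} (hf : ∀ i, IsIdeal (f i)) :
    IsIdeal (⋂ i, f i) := by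
  refine ⟨⟨⊥, Set.mem_iInter.mpr fun i => (hf i).bot_mem⟩, ?_, ?_⟩
  · intro x hx y hy
    simp only [Set.mem_iInter] at hx hy ⊢
    exact fun i => (hf i).2.1 x (hx i) y (hy i)
  · intro x hx l hl
    simp only [Set.mem_iInter] at hx ⊢
    exact fun i => (hf i).mem_of_le (hx i) hl

theorem rad_mono {I J : Set Q} (h : I ⊆ J) : rad I ⊆ rad J :=
  fun _ ⟨n, hn, hx⟩ => ⟨n, hn, h hx⟩

theorem rad_iInter {ι : Type*} [Finite ι] {f : ι → Set Q} (hf : ∀ i, IsIdeal (f i)) :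
    rad (⋂ i, f i) = ⋂ i, rad (f i) := by
  refine subset_antisymm (Set.subset_iInter fun i => rad_mono (Set.iInter_subset f i)) ?_
  intro x hx
  choose n hn hxn using Set.mem_iInter.mp hx
  obtain ⟨N, hN⟩ := (Set.finite_range n).bddAbove
  refine ⟨N + 1, Nat.le_add_left 1 N, Set.mem_iInter.mpr fun i => ?_⟩
  exact (hf i).mem_of_le (hxn i) (qpow_antitone x ((hN ⟨i, rfl⟩).trans (Nat.le_succ N)))

theorem IsPrimaryIdeal.iInter {ι : Type*} [Finite ι] [Nonempty ι] {P : Set Q} {f : ι → Set Q}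
    (hf : ∀ i, IsPrimaryIdeal (f i)) (hrad : ∀ i, rad (f i) = P) :
    IsPrimaryIdeal (⋂ i, f i) := by
  obtain ⟨i₀⟩ := ‹Nonempty ι›
  refine ⟨isIdeal_iInter fun i => (hf i).1, fun h => (hf i₀).2.1 (Set.iInter_eq_univ.mp h i₀), ?_⟩
  intro x y hxy
  refine or_iff_not_imp_left.mpr fun hx => ?_
  obtain ⟨j, hj⟩ := not_forall.mp (mt Set.mem_iInter.mpr hx)
  have hy : y ∈ rad (f j) := ((hf j).2.2 x y (Set.mem_iInter.mp hxy j)).resolve_left hj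
  show y ∈ rad (⋂ i, f i)
  rw [rad_iInter fun i => (hf i).1, Set.iInter_congr hrad, Set.iInter_const, ← hrad j]
  exact hy

theorem stmt17_general {ι : Type*} [Fintype ι] [Nonempty ι] {P : Set Q}
    {f : ι → Set Q} (hf : ∀ i, IsPrimaryIdeal (f i) ∧ rad (f i) = P) :
    IsPrimaryIdeal (⋂ i, f i) ∧ rad (⋂ i, f i) = P := by
  refine ⟨IsPrimaryIdeal.iInter (fun i => (hf i).1) (fun i => (hf i).2), ?_⟩
  rw [rad_iInter fun i => (hf i).1.1, Set.iInter_congr fun i => (hf i).2, Set.iInter_const]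

theorem stmt17 {ι : Type*} [Fintype ι] [Nonempty ι] {P : Set Q} (hP : IsPrimeIdeal P)
    {f : ι → Set Q} (hf : ∀ i, IsPrimaryIdeal (f i) ∧ rad (f i) = P) :
    IsPrimaryIdeal (⋂ i, f i) ∧ rad (⋂ i, f i) = P :=
  stmt17_general hf
end
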